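/- Assume in addition that L_0 is differentiable on [0,∞). Then every L_n is differentiable on [0,∞) and its derivative at 0 satisfies L_n'(0) = L_0'(0) / p_n for all n ≥ 1; equivalently, the mean time between overflows from the first n servers is E T_n = −L_n'(0) = (−L_0'(0)) / p_n = 1/(λ p_n) when −L_0'(0) = 1/λ. -/

import Mathlib

open Filter

/-- The recursively defined overflow Laplace–Stieltjes transforms:
`ovLST L0 ms 0 = L0` and
`ovLST L0 ms n s = L_{n-1}(μ_n + s) / (1 - L_{n-1}(s) + L_{n-1}(μ_n + s))`. -/
noncomputable def ovLST (L0 : ℝ → ℝ) (ms : ℕ → ℝ) : ℕ → ℝ → ℝ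
  | 0 => L0
  | n + 1 => fun s =>
      ovLST L0 ms n (ms (n + 1) + s) /
        (1 - ovLST L0 ms n s + ovLST L0 ms n (ms (n + 1) + s))

/-- The blocking probability of the first `n` servers: `p_n = ∏_{i=1}^n L_{i-1}(μ_i)`. -/
noncomputable def blockP (L0 : ℝ → ℝ) (ms : ℕ → ℝ) (n : ℕ) : ℝ :=
  ∏ i ∈ Finset.Icc 1 n, ovLST L0 ms (i - 1) (ms i)

/-!
Writing `T = overflowStep`, i.e. `T f m s = f (m + s) / (1 - f s + f (m + s))`, we have
`L_{n+1} = T L_n μ_{n+1}`. If `f` maps `[0, ∞)` into `(0, 1]` then so does `T f m`, and its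
denominator stays positive, so `T f m` is differentiable wherever `f` is. At `s = 0`, where
`f 0 = 1`, numerator and denominator both equal `f m`, and the `f'(m)` terms of their derivatives
cancel in the quotient rule, leaving `(T f m)'(0) = f'(0) / f m`. Iterating,
`L_n'(0) = L_0'(0) / (ℓ_1 ⋯ ℓ_n) = L_0'(0) / p_n`.
-/

open Set

noncomputable def overflowStep (f : ℝ → ℝ) (m : ℝ) (s : ℝ) : ℝ :=
  f (m + s) / (1 - f s + f (m + s))

section overflowStep

variable {f : ℝ → ℝ} {m : ℝ}

lemma overflowStep_denom_pos (hf : MapsTo f (Ici 0) (Ioc 0 1)) (hm : 0 ≤ m) {s : ℝ}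
    (hs : 0 ≤ s) : 0 < 1 - f s + f (m + s) := by
  have hfs := (hf (mem_Ici.2 hs)).2
  have hfms := (hf (mem_Ici.2 (add_nonneg hm hs))).1
  linarith

lemma mapsTo_overflowStep (hf : MapsTo f (Ici 0) (Ioc 0 1)) (hm : 0 ≤ m) :
    MapsTo (overflowStep f m) (Ici 0) (Ioc 0 1) := by
  intro s hs
  have hden := overflowStep_denom_pos hf hm hs
  have hfs := (hf hs).2
  have hfms := (hf (mem_Ici.2 (add_nonneg hm hs))).1
  exact ⟨div_pos hfms hden, (div_le_one hden).2 (by linarith)⟩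

lemma overflowStep_zero (hf0 : f 0 = 1) (hfm : f m ≠ 0) : overflowStep f m 0 = 1 := by
  simp [overflowStep, hf0, hfm]

lemma differentiableOn_overflowStep (hf : MapsTo f (Ici 0) (Ioc 0 1))
    (hdf : DifferentiableOn ℝ f (Ici 0)) (hm : 0 ≤ m) :
    DifferentiableOn ℝ (overflowStep f m) (Ici 0) := by
  have hshift : DifferentiableOn ℝ (fun s => f (m + s)) (Ici 0) :=
    hdf.comp (differentiableOn_id.const_add m) fun s hs => add_nonneg hm hs
  exact hshift.div (((differentiableOn_const 1).sub hdf).add hshift)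
    fun s hs => (overflowStep_denom_pos hf hm hs).ne'

lemma hasDerivWithinAt_overflowStep_zero (hf0 : f 0 = 1) (hfm : f m ≠ 0) (hm : 0 ≤ m)
    {d dm : ℝ} (hd : HasDerivWithinAt f d (Ici 0) 0) (hdm : HasDerivWithinAt f dm (Ici 0) m) :
    HasDerivWithinAt (overflowStep f m) (d / f m) (Ici 0) 0 := by
  have hshift : HasDerivWithinAt (fun s => f (m + s)) dm (Ici 0) 0 := by
    have := (add_zero m ▸ hdm).scomp (0 : ℝ) ((hasDerivWithinAt_id 0 (Ici 0)).const_add m)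
      fun s (hs : 0 ≤ s) => add_nonneg hm hs
    rwa [one_smul] at this
  have hden : HasDerivWithinAt (fun s => 1 - f s + f (m + s)) (-d + dm) (Ici 0) 0 :=
    (hd.const_sub 1).add hshift
  have hquot : HasDerivWithinAt (overflowStep f m) ((dm * f m - f m * (-d + dm)) / f m ^ 2)
      (Ici 0) 0 := by
    have h := hshift.div hden (by simpa [hf0] using hfm)
    simp only [hf0, sub_self, zero_add, add_zero] at h
    exact h
  convert hquot using 1
  field_simp
  ring

end overflowStep

section ovLST

variable {L0 : ℝ → ℝ} {ms : ℕ → ℝ}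

lemma ovLST_succ (n : ℕ) : ovLST L0 ms (n + 1) = overflowStep (ovLST L0 ms n) (ms (n + 1)) :=
  rfl

lemma blockP_succ (n : ℕ) :
    blockP L0 ms (n + 1) = blockP L0 ms n * ovLST L0 ms n (ms (n + 1)) := by
  rw [blockP, Finset.prod_Icc_succ_top (Nat.le_add_left 1 n), Nat.add_sub_cancel]
  rfl

variable (hL0 : MapsTo L0 (Ici 0) (Ioc 0 1)) (hms : ∀ n, 0 ≤ ms (n + 1))
include hL0 hms

lemma mapsTo_ovLST (n : ℕ) : MapsTo (ovLST L0 ms n) (Ici 0) (Ioc 0 1) := by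
  induction n with
  | zero => exact hL0
  | succ n ih => exact mapsTo_overflowStep ih (hms n)

lemma ovLST_pos_at_rate (n : ℕ) : 0 < ovLST L0 ms n (ms (n + 1)) :=
  (mapsTo_ovLST hL0 hms n (mem_Ici.2 (hms n))).1

lemma ovLST_apply_zero (hL00 : L0 0 = 1) (n : ℕ) : ovLST L0 ms n 0 = 1 := by
  cases n with
  | zero => exact hL00
  | succ n => exact overflowStep_zero (ovLST_apply_zero hL00 n) (ovLST_pos_at_rate hL0 hms n).ne'

lemma differentiableOn_ovLST (hdiff : DifferentiableOn ℝ L0 (Ici 0)) (n : ℕ) :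
    DifferentiableOn ℝ (ovLST L0 ms n) (Ici 0) := by
  induction n with
  | zero => exact hdiff
  | succ n ih => exact differentiableOn_overflowStep (mapsTo_ovLST hL0 hms n) ih (hms n)

lemma derivWithin_ovLST_zero (hL00 : L0 0 = 1) (hdiff : DifferentiableOn ℝ L0 (Ici 0))
    (n : ℕ) :
    derivWithin (ovLST L0 ms n) (Ici 0) 0 = derivWithin L0 (Ici 0) 0 / blockP L0 ms n := by
  induction n with
  | zero => simp [ovLST, blockP]
  | succ n ih =>
    have hdf := differentiableOn_ovLST hL0 hms hdiff n
    have hstep := hasDerivWithinAt_overflowStep_zero (ovLST_apply_zero hL0 hms hL00 n)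
      (ovLST_pos_at_rate hL0 hms n).ne' (hms n) (hdf 0 self_mem_Ici).hasDerivWithinAt
      (hdf _ (mem_Ici.2 (hms n))).hasDerivWithinAt
    rw [ovLST_succ, hstep.derivWithin (uniqueDiffOn_Ici 0 0 self_mem_Ici), ih, blockP_succ,
      div_div]

end ovLST

theorem stmt_11_general
    (ms : ℕ → ℝ)
    (hms : ∀ n, 1 ≤ n → 0 < ms n)
    (L0 : ℝ → ℝ) (hL00 : L0 0 = 1)
    (hL0pos : ∀ s, 0 ≤ s → 0 < L0 s)
    (hL0anti : StrictAntiOn L0 (Set.Ici 0))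
    (hdiff : DifferentiableOn ℝ L0 (Set.Ici 0)) :
    ∀ n, 1 ≤ n →
      DifferentiableOn ℝ (ovLST L0 ms n) (Set.Ici 0) ∧
      derivWithin (ovLST L0 ms n) (Set.Ici 0) 0 =
        derivWithin L0 (Set.Ici 0) 0 / blockP L0 ms n ∧
      (∀ lam : ℝ, 0 < lam → derivWithin L0 (Set.Ici 0) 0 = -(1 / lam) →
        -derivWithin (ovLST L0 ms n) (Set.Ici 0) 0 = 1 / (lam * blockP L0 ms n)) := by
  intro n _
  have hL0 : MapsTo L0 (Ici 0) (Ioc 0 1) := fun s hs =>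
    ⟨hL0pos s hs, hL00 ▸ hL0anti.antitoneOn self_mem_Ici hs hs⟩
  have hms' : ∀ n, 0 ≤ ms (n + 1) := fun n => (hms (n + 1) (Nat.le_add_left 1 n)).le
  have hder := derivWithin_ovLST_zero hL0 hms' hL00 hdiff n
  refine ⟨differentiableOn_ovLST hL0 hms' hdiff n, hder, fun lam _ hL => ?_⟩
  rw [hder, hL, neg_div, neg_neg, div_div]

theorem stmt_11
    (μ : ℝ) (hμ : 0 < μ) (ms : ℕ → ℝ)
    (hms : ∀ n, 1 ≤ n → 0 < ms n)
    (hsum : HasSum (fun n => ms (n + 1)) μ)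
    (L0 : ℝ → ℝ) (hL00 : L0 0 = 1)
    (hL0pos : ∀ s, 0 ≤ s → 0 < L0 s)
    (hL0anti : StrictAntiOn L0 (Set.Ici 0))
    (hL0lim : Tendsto L0 atTop (nhds 0))
    (hdiff : DifferentiableOn ℝ L0 (Set.Ici 0)) :
    ∀ n, 1 ≤ n →
      DifferentiableOn ℝ (ovLST L0 ms n) (Set.Ici 0) ∧
      derivWithin (ovLST L0 ms n) (Set.Ici 0) 0 =
        derivWithin L0 (Set.Ici 0) 0 / blockP L0 ms n ∧
      (∀ lam : ℝ, 0 < lam → derivWithin L0 (Set.Ici 0) 0 = -(1 / lam) →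
        -derivWithin (ovLST L0 ms n) (Set.Ici 0) 0 = 1 / (lam * blockP L0 ms n)) :=
  stmt_11_general ms hms L0 hL00 hL0pos hL0anti hdiff
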